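/- arXiv:1902.08778 — 2 statements merged into one kernel-verified Lean document; each statement's English description precedes it below -/
import Mathlib

section
/- Let u¹, …, uⁿ, φ ∈ C_c^∞(ℝⁿ) and let U¹, …, Uⁿ, Φ : ℝ^{n+1}_+ → ℝ be smooth extensions (i.e. U^i(x,0) = u^i(x), Φ(x,0) = φ(x)) with sufficient decay at infinity. Then ∫_{ℝⁿ} det(∇_x u¹, …, ∇_x uⁿ) φ dx = ± ∫_{ℝ^{n+1}_+} det(∇_{x,t} U¹, …, ∇_{x,t} Uⁿ, ∇_{x,t} Φ) d(x,t). -/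
open MeasureTheory
open scoped ENNReal BigOperators

/-- The `j`-th coordinate direction in the upper half space model `ℝⁿ × ℝ`:
for `j < n` it is the `j`-th horizontal direction, for `j = n` the vertical (`t`) direction. -/
noncomputable def dir {n : ℕ} (j : Fin (n + 1)) : EuclideanSpace ℝ (Fin n) × ℝ :=
  if h : (j : ℕ) < n then (EuclideanSpace.single ⟨j, h⟩ 1, 0) else (0, 1)

/-- The `(n+1)×(n+1)` matrix whose `i`-th row is the full gradient `∇_{x,t} V^i`. -/
noncomputable def bulkMatrix {n : ℕ}
    (V : Fin (n + 1) → (EuclideanSpace ℝ (Fin n) × ℝ → ℝ))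
    (p : EuclideanSpace ℝ (Fin n) × ℝ) : Matrix (Fin (n + 1)) (Fin (n + 1)) ℝ :=
  Matrix.of fun i j => fderiv ℝ (V i) p (dir j)

/-- The `n×n` matrix whose `i`-th row is the gradient `∇_x u^i`. -/
noncomputable def bdryMatrix {n : ℕ} (u : Fin n → (EuclideanSpace ℝ (Fin n) → ℝ))
    (x : EuclideanSpace ℝ (Fin n)) : Matrix (Fin n) (Fin n) ℝ :=
  Matrix.of fun i j => fderiv ℝ (u i) x (EuclideanSpace.single j 1)

/-- The open upper half space `ℝ^{n+1}_+ = ℝⁿ × (0,∞)`. -/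
def upperHalf (n : ℕ) : Set (EuclideanSpace ℝ (Fin n) × ℝ) := {p | 0 < p.2}

/-! ### Auxiliary lemmas -/

section Helpers

open Set Filter Topology Metric

lemma contDiff_fderiv_apply' {H : Type*} [NormedAddCommGroup H] [NormedSpace ℝ H]
    {f : H → ℝ} (hf : ContDiff ℝ (⊤ : ℕ∞) f) (v : H) :
    ContDiff ℝ (⊤ : ℕ∞) fun p => fderiv ℝ f p v :=
  (hf.fderiv_right (by simp)).clm_apply contDiff_const

/-- The integral of a directional derivative of a compactly supported smooth function
over the whole space vanishes. -/
lemma integral_fderiv_apply_eq_zero'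
    {F : Type*} [NormedAddCommGroup F] [NormedSpace ℝ F] [MeasurableSpace F]
    [BorelSpace F] [FiniteDimensional ℝ F]
    (μ : Measure F) [μ.IsAddHaarMeasure] {h : F → ℝ}
    (hh : ContDiff ℝ (⊤ : ℕ∞) h) (hh' : HasCompactSupport h) (v : F) :
    ∫ x, fderiv ℝ h x v ∂μ = 0 := by
  obtain ⟨C, hC⟩ := ContDiff.lipschitzWith_of_hasCompactSupport hh' hh (by simp)
  obtain ⟨R, hR⟩ := hh'.isBounded.subset_ball 0
  set g : F → ℝ := fun y => min 1 (max (R + 1 - ‖y‖) 0) with hg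
  have l1 : LipschitzWith 1 (fun y : F => R + 1 - ‖y‖) := by
    refine LipschitzWith.of_dist_le_mul fun x y => ?_
    simp only [Real.dist_eq, NNReal.coe_one, one_mul]
    have h1 : |‖y‖ - ‖x‖| ≤ ‖y - x‖ := abs_norm_sub_norm_le y x
    calc |(R + 1 - ‖x‖) - (R + 1 - ‖y‖)| = |‖y‖ - ‖x‖| := by ring_nf
    _ ≤ ‖y - x‖ := h1
    _ = dist x y := by rw [dist_eq_norm, norm_sub_rev]
  have lg : LipschitzWith 1 g := (l1.max_const 0).const_min 1
  have hgball : ∀ y : F, ‖y‖ ≤ R → g y = 1 := by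
    intro y hy
    have : (1:ℝ) ≤ R + 1 - ‖y‖ := by linarith
    simp only [hg]
    rw [max_eq_left (by linarith), min_eq_left this]
  have hgcs : HasCompactSupport g := by
    apply HasCompactSupport.intro (isCompact_closedBall (0:F) (R+1))
    intro y hy
    simp only [mem_closedBall, dist_zero_right, not_le] at hy
    simp only [hg]
    rw [max_eq_right (by linarith), min_eq_right (by norm_num)]
  have hdiff : ∀ x, DifferentiableAt ℝ h x := fun x => (hh.differentiable (by simp)).differentiableAt
  have key := LipschitzWith.integral_lineDeriv_mul_eq (μ := μ) hC lg hgcs v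
  have hL : ∀ x, lineDeriv ℝ h x v * g x = fderiv ℝ h x v := by
    intro x
    rw [(hdiff x).lineDeriv_eq_fderiv]
    by_cases hx : x ∈ tsupport h
    · rw [hgball x (le_of_lt (by simpa [mem_ball, dist_zero_right] using hR hx)), mul_one]
    · have h0 : fderiv ℝ h x = 0 := by
        by_contra hne
        exact hx (support_fderiv_subset ℝ (by simpa [Function.mem_support] using hne))
      simp [h0]
  have hRz : ∀ x, lineDeriv ℝ g x (-v) * h x = 0 := by
    intro x
    by_cases hx : h x = 0
    · simp [hx]
    · have hmem : x ∈ Metric.ball (0:F) R := hR (subset_tsupport h (Function.mem_support.2 hx))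
      have hev : g =ᶠ[nhds x] fun _ => 1 := by
        filter_upwards [Metric.isOpen_ball.mem_nhds hmem] with y hy
        exact hgball y (le_of_lt (by simpa [mem_ball, dist_zero_right] using hy))
      have : lineDeriv ℝ g x (-v) = lineDeriv ℝ (fun _ => (1:ℝ)) x (-v) := hev.lineDeriv_eq
      rw [this]; simp [lineDeriv]
  calc ∫ x, fderiv ℝ h x v ∂μ = ∫ x, lineDeriv ℝ h x v * g x ∂μ := by
        exact integral_congr_ae (Eventually.of_forall fun x => (hL x).symm)
  _ = ∫ x, lineDeriv ℝ g x (-v) * h x ∂μ := key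
  _ = 0 := by simp only [hRz]; exact integral_zero _ _

variable {n : ℕ}

lemma hcs_slice_left' {E : Type*} [NormedAddCommGroup E] {g : E × ℝ → ℝ}
    (hg : HasCompactSupport g) (x : E) : HasCompactSupport fun t => g (x, t) := by
  obtain ⟨r, hr⟩ := hg.isBounded.subset_closedBall 0
  apply HasCompactSupport.intro (isCompact_Icc (a := -r) (b := r))
  intro t ht
  apply image_eq_zero_of_notMem_tsupport
  intro hmem
  have h1 := hr hmem
  simp only [mem_closedBall, dist_zero_right, Prod.norm_def] at h1
  exact ht (abs_le.1 (le_trans (le_max_right _ _) h1))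

lemma hcs_slice_right' {g : EuclideanSpace ℝ (Fin n) × ℝ → ℝ}
    (hg : HasCompactSupport g) (t : ℝ) : HasCompactSupport fun x => g (x, t) := by
  obtain ⟨r, hr⟩ := hg.isBounded.subset_closedBall 0
  apply HasCompactSupport.intro (isCompact_closedBall (0 : EuclideanSpace ℝ (Fin n)) r)
  intro x hx
  apply image_eq_zero_of_notMem_tsupport
  intro hmem
  have h1 := hr hmem
  simp only [mem_closedBall, dist_zero_right, Prod.norm_def] at h1
  exact hx (by simpa [mem_closedBall, dist_zero_right] using le_trans (le_max_left _ _) h1)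

lemma restrict_upperHalf' :
    (volume : Measure (EuclideanSpace ℝ (Fin n) × ℝ)).restrict (upperHalf n)
      = (volume : Measure (EuclideanSpace ℝ (Fin n))).prod
          ((volume : Measure ℝ).restrict (Ioi 0)) := by
  have h : upperHalf n = (univ : Set (EuclideanSpace ℝ (Fin n))) ×ˢ Ioi (0:ℝ) := by
    ext p; simp [upperHalf, Set.mem_prod]
  rw [h, Measure.volume_eq_prod, ← Measure.prod_restrict, Measure.restrict_univ]

/-- Fundamental theorem of calculus in the vertical direction over the upper half space. -/
lemma integral_vert' {f : EuclideanSpace ℝ (Fin n) × ℝ → ℝ}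
    (hf : ContDiff ℝ (⊤ : ℕ∞) f) (hf' : HasCompactSupport f) :
    ∫ p in upperHalf n, fderiv ℝ f p (0, 1) = -∫ x, f (x, 0) := by
  have hint : Integrable (fun p : EuclideanSpace ℝ (Fin n) × ℝ => fderiv ℝ f p (0, 1)) :=
    (contDiff_fderiv_apply' hf _).continuous.integrable_of_hasCompactSupport (hf'.fderiv_apply ℝ _)
  have hint2 : Integrable (fun p : EuclideanSpace ℝ (Fin n) × ℝ => fderiv ℝ f p (0, 1))
      ((volume : Measure (EuclideanSpace ℝ (Fin n))).prod ((volume : Measure ℝ).restrict (Ioi 0))) := by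
    rw [← restrict_upperHalf']; exact hint.restrict
  rw [restrict_upperHalf', MeasureTheory.integral_prod _ hint2]
  rw [← integral_neg]
  refine integral_congr_ae (Eventually.of_forall fun x => ?_)
  have hder : ∀ t : ℝ, HasDerivAt (fun t => f (x, t)) (fderiv ℝ f (x, t) (0, 1)) t := by
    intro t
    exact ((hf.differentiable (by simp) (x, t)).hasFDerivAt).comp_hasDerivAt t
      ((hasDerivAt_const t x).prodMk (hasDerivAt_id t))
  have hsl : ContDiff ℝ 1 fun t : ℝ => f (x, t) :=
    (hf.comp ((contDiff_const (c := x)).prodMk contDiff_id)).of_le (by simp)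
  have hmain := HasCompactSupport.integral_Ioi_deriv_eq hsl (hcs_slice_left' hf' x) 0
  calc ∫ t in Ioi (0:ℝ), fderiv ℝ f (x, t) (0, 1)
      = ∫ t in Ioi (0:ℝ), deriv (fun t => f (x, t)) t := by
        refine integral_congr_ae (Eventually.of_forall fun t => ?_)
        exact ((hder t).deriv).symm
  _ = -f (x, 0) := hmain

/-- The integral of a horizontal derivative over the upper half space vanishes. -/
lemma integral_horiz' {f : EuclideanSpace ℝ (Fin n) × ℝ → ℝ}
    (hf : ContDiff ℝ (⊤ : ℕ∞) f) (hf' : HasCompactSupport f) (v : EuclideanSpace ℝ (Fin n)) :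
    ∫ p in upperHalf n, fderiv ℝ f p (v, 0) = 0 := by
  have hint : Integrable (fun p : EuclideanSpace ℝ (Fin n) × ℝ => fderiv ℝ f p (v, 0)) :=
    (contDiff_fderiv_apply' hf _).continuous.integrable_of_hasCompactSupport (hf'.fderiv_apply ℝ _)
  have hint2 : Integrable (fun p : EuclideanSpace ℝ (Fin n) × ℝ => fderiv ℝ f p (v, 0))
      ((volume : Measure (EuclideanSpace ℝ (Fin n))).prod ((volume : Measure ℝ).restrict (Ioi 0))) := by
    rw [← restrict_upperHalf']; exact hint.restrict
  rw [restrict_upperHalf', MeasureTheory.integral_prod_symm _ hint2]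
  have hinner : ∀ t : ℝ, ∫ x : EuclideanSpace ℝ (Fin n), fderiv ℝ f (x, t) (v, 0) = 0 := by
    intro t
    have hsl : ContDiff ℝ (⊤ : ℕ∞) fun x : EuclideanSpace ℝ (Fin n) => f (x, t) :=
      hf.comp (contDiff_id.prodMk (contDiff_const (c := t)))
    have hder : ∀ x : EuclideanSpace ℝ (Fin n), HasFDerivAt (fun y : EuclideanSpace ℝ (Fin n) => f (y, t))
        ((fderiv ℝ f (x, t)).comp ((ContinuousLinearMap.id ℝ (EuclideanSpace ℝ (Fin n))).prod 0)) x := by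
      intro x
      exact ((hf.differentiable (by simp) (x, t)).hasFDerivAt).comp x
        ((hasFDerivAt_id x).prodMk (hasFDerivAt_const t x))
    have h0 := integral_fderiv_apply_eq_zero' (volume : Measure (EuclideanSpace ℝ (Fin n)))
      hsl (hcs_slice_right' hf' t) v
    calc ∫ x : EuclideanSpace ℝ (Fin n), fderiv ℝ f (x, t) (v, 0)
        = ∫ x : EuclideanSpace ℝ (Fin n), fderiv ℝ (fun y => f (y, t)) x v := by
          refine integral_congr_ae (Eventually.of_forall fun x => ?_)
          show fderiv ℝ f (x, t) (v, 0) = fderiv ℝ (fun y => f (y, t)) x v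
          rw [(hder x).fderiv]
          simp
    _ = 0 := h0
  calc ∫ t in Ioi (0:ℝ), ∫ x : EuclideanSpace ℝ (Fin n), fderiv ℝ f (x, t) (v, 0)
      = ∫ t in Ioi (0:ℝ), (0:ℝ) := by
        refine integral_congr_ae (Eventually.of_forall fun t => ?_)
        exact hinner t
  _ = 0 := by simp

lemma det_row_expansion' {m : ℕ} (M : Matrix (Fin m) (Fin m) ℝ) :
    M.det = ∑ σ : Equiv.Perm (Fin m), ((Equiv.Perm.sign σ : ℤ) : ℝ) * ∏ i, M i (σ i) := by
  rw [← Matrix.det_transpose, Matrix.det_apply]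
  refine Finset.sum_congr rfl fun σ _ => ?_
  simp [Matrix.transpose_apply, Units.smul_def, zsmul_eq_mul]

/-- Pointwise divergence-form identity for the bulk determinant. -/
lemma bulk_div_identity (U : Fin n → EuclideanSpace ℝ (Fin n) × ℝ → ℝ)
    (Φ : EuclideanSpace ℝ (Fin n) × ℝ → ℝ)
    (hU : ∀ i, ContDiff ℝ (⊤ : ℕ∞) (U i)) (hΦ : ContDiff ℝ (⊤ : ℕ∞) Φ)
    (G : Equiv.Perm (Fin (n+1)) → EuclideanSpace ℝ (Fin n) × ℝ → ℝ)
    (hG : G = fun σ p => Φ p * ∏ i : Fin n, fderiv ℝ (U i) p (dir (σ i.castSucc)))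
    (V : Fin (n+1) → EuclideanSpace ℝ (Fin n) × ℝ → ℝ) (hV : V = Fin.snoc U Φ)
    (p : EuclideanSpace ℝ (Fin n) × ℝ) :
    (bulkMatrix V p).det
      = ∑ σ : Equiv.Perm (Fin (n+1)),
          ((Equiv.Perm.sign σ : ℤ) : ℝ) * fderiv ℝ (G σ) p (dir (σ (Fin.last n))) := by
  classical
  have hUdiff : ∀ i, Differentiable ℝ (U i) := fun i => (hU i).differentiable (by simp)
  have hΦdiff : Differentiable ℝ Φ := hΦ.differentiable (by simp)
  set f2 : Fin n → (EuclideanSpace ℝ (Fin n) × ℝ) →L[ℝ]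
      ((EuclideanSpace ℝ (Fin n) × ℝ) →L[ℝ] ℝ) :=
    fun i => fderiv ℝ (fderiv ℝ (U i)) p with hf2
  have hfd : ∀ i : Fin n, HasFDerivAt (fderiv ℝ (U i)) (f2 i) p := fun i =>
    (((hU i).fderiv_right (m := 1) (WithTop.coe_le_coe.mpr le_top)).differentiable (by simp) p).hasFDerivAt
  have hsymm : ∀ i v w, f2 i v w = f2 i w v := fun i =>
    second_derivative_symmetric (fun y => (hUdiff i y).hasFDerivAt) (hfd i)
  have hgd : ∀ (σ : Equiv.Perm (Fin (n+1))) (i : Fin n),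
      HasFDerivAt (fun q => fderiv ℝ (U i) q (dir (σ i.castSucc)))
        ((ContinuousLinearMap.apply ℝ ℝ (dir (σ i.castSucc))).comp (f2 i)) p := fun σ i =>
    ((ContinuousLinearMap.apply ℝ ℝ (dir (σ i.castSucc))).hasFDerivAt).comp p (hfd i)
  have hGd : ∀ σ : Equiv.Perm (Fin (n+1)), HasFDerivAt (G σ)
      (Φ p • (∑ i : Fin n, (∏ j ∈ Finset.univ.erase i, fderiv ℝ (U j) p (dir (σ j.castSucc))) •
          ((ContinuousLinearMap.apply ℝ ℝ (dir (σ i.castSucc))).comp (f2 i)))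
        + (∏ i : Fin n, fderiv ℝ (U i) p (dir (σ i.castSucc))) • fderiv ℝ Φ p) p := by
    intro σ
    rw [hG]
    exact (hΦdiff p).hasFDerivAt.mul (HasFDerivAt.finset_prod (fun i _ => hgd σ i))
  have hfder : ∀ σ : Equiv.Perm (Fin (n+1)), fderiv ℝ (G σ) p (dir (σ (Fin.last n)))
      = Φ p * (∑ i : Fin n,
          (∏ j ∈ Finset.univ.erase i, fderiv ℝ (U j) p (dir (σ j.castSucc))) *
            f2 i (dir (σ (Fin.last n))) (dir (σ i.castSucc)))
        + (∏ i : Fin n, fderiv ℝ (U i) p (dir (σ i.castSucc)))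
            * fderiv ℝ Φ p (dir (σ (Fin.last n))) := by
    intro σ
    rw [(hGd σ).fderiv]
    simp only [ContinuousLinearMap.add_apply, ContinuousLinearMap.smul_apply,
      ContinuousLinearMap.coe_sum', Finset.sum_apply, ContinuousLinearMap.coe_comp',
      Function.comp_apply, ContinuousLinearMap.apply_apply, smul_eq_mul, Finset.mul_sum]
  have hzero : ∑ σ : Equiv.Perm (Fin (n+1)), ((Equiv.Perm.sign σ : ℤ) : ℝ) *
      (Φ p * ∑ i : Fin n,
        (∏ j ∈ Finset.univ.erase i, fderiv ℝ (U j) p (dir (σ j.castSucc))) *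
          f2 i (dir (σ (Fin.last n))) (dir (σ i.castSucc))) = 0 := by
    simp_rw [Finset.mul_sum]
    rw [Finset.sum_comm]
    refine Finset.sum_eq_zero fun i _ => ?_
    set h : Equiv.Perm (Fin (n+1)) → ℝ := fun σ =>
      ((Equiv.Perm.sign σ : ℤ) : ℝ) *
        (Φ p * ((∏ j ∈ Finset.univ.erase i, fderiv ℝ (U j) p (dir (σ j.castSucc))) *
          f2 i (dir (σ (Fin.last n))) (dir (σ i.castSucc)))) with hh
    show ∑ σ : Equiv.Perm (Fin (n+1)), h σ = 0
    have hne : i.castSucc ≠ Fin.last n := (Fin.castSucc_lt_last i).ne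
    have hinv : ∀ σ : Equiv.Perm (Fin (n+1)),
        h (σ * Equiv.swap i.castSucc (Fin.last n)) = -h σ := by
      intro σ
      have hsign : ((Equiv.Perm.sign (σ * Equiv.swap i.castSucc (Fin.last n)) : ℤ) : ℝ)
          = -((Equiv.Perm.sign σ : ℤ) : ℝ) := by
        rw [Equiv.Perm.sign_mul, Equiv.Perm.sign_swap hne]
        push_cast [mul_neg]
        ring
      have happ : ∀ j : Fin (n+1), (σ * Equiv.swap i.castSucc (Fin.last n)) j
          = σ (Equiv.swap i.castSucc (Fin.last n) j) := fun j => rfl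
      have hprod : ∏ j ∈ Finset.univ.erase i,
          fderiv ℝ (U j) p (dir ((σ * Equiv.swap i.castSucc (Fin.last n)) j.castSucc))
          = ∏ j ∈ Finset.univ.erase i, fderiv ℝ (U j) p (dir (σ j.castSucc)) := by
        refine Finset.prod_congr rfl fun j hj => ?_
        have hji : j ≠ i := (Finset.mem_erase.1 hj).1
        rw [happ, Equiv.swap_apply_of_ne_of_ne
          (fun hc => hji (Fin.castSucc_injective n hc)) (Fin.castSucc_lt_last j).ne]
      have h1 : (σ * Equiv.swap i.castSucc (Fin.last n)) (Fin.last n) = σ i.castSucc := by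
        rw [happ, Equiv.swap_apply_right]
      have h2 : (σ * Equiv.swap i.castSucc (Fin.last n)) i.castSucc = σ (Fin.last n) := by
        rw [happ, Equiv.swap_apply_left]
      rw [hh]
      simp only [hsign, hprod, h1, h2]
      rw [hsymm i (dir (σ i.castSucc)) (dir (σ (Fin.last n)))]
      ring
    have hsum := Equiv.sum_comp (Equiv.mulRight (Equiv.swap i.castSucc (Fin.last n))) h
    have : ∑ σ : Equiv.Perm (Fin (n+1)), h σ = -∑ σ : Equiv.Perm (Fin (n+1)), h σ := by
      conv_lhs => rw [← hsum]
      simp only [Equiv.coe_mulRight, hinv, Finset.sum_neg_distrib]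
    linarith
  rw [det_row_expansion']
  have hdetterm : ∀ σ : Equiv.Perm (Fin (n+1)),
      (∏ k : Fin (n+1), (bulkMatrix V p) k (σ k))
        = (∏ i : Fin n, fderiv ℝ (U i) p (dir (σ i.castSucc)))
            * fderiv ℝ Φ p (dir (σ (Fin.last n))) := by
    intro σ
    rw [Fin.prod_univ_castSucc]
    congr 1
    · refine Finset.prod_congr rfl fun i _ => ?_
      simp [bulkMatrix, hV, Fin.snoc_castSucc]
    · simp [bulkMatrix, hV, Fin.snoc_last]
  calc ∑ σ : Equiv.Perm (Fin (n+1)), ((Equiv.Perm.sign σ : ℤ) : ℝ) *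
        ∏ k, (bulkMatrix V p) k (σ k)
      = ∑ σ : Equiv.Perm (Fin (n+1)), ((Equiv.Perm.sign σ : ℤ) : ℝ) *
          ((∏ i : Fin n, fderiv ℝ (U i) p (dir (σ i.castSucc)))
            * fderiv ℝ Φ p (dir (σ (Fin.last n)))) := by
        exact Finset.sum_congr rfl fun σ _ => by rw [hdetterm σ]
  _ = ∑ σ : Equiv.Perm (Fin (n+1)),
        ((Equiv.Perm.sign σ : ℤ) : ℝ) * fderiv ℝ (G σ) p (dir (σ (Fin.last n))) := by
        rw [eq_comm]
        calc ∑ σ : Equiv.Perm (Fin (n+1)),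
              ((Equiv.Perm.sign σ : ℤ) : ℝ) * fderiv ℝ (G σ) p (dir (σ (Fin.last n)))
            = ∑ σ : Equiv.Perm (Fin (n+1)), (((Equiv.Perm.sign σ : ℤ) : ℝ) *
                (Φ p * ∑ i : Fin n,
                  (∏ j ∈ Finset.univ.erase i, fderiv ℝ (U j) p (dir (σ j.castSucc))) *
                    f2 i (dir (σ (Fin.last n))) (dir (σ i.castSucc)))
              + ((Equiv.Perm.sign σ : ℤ) : ℝ) *
                ((∏ i : Fin n, fderiv ℝ (U i) p (dir (σ i.castSucc)))
                  * fderiv ℝ Φ p (dir (σ (Fin.last n))))) := by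
              refine Finset.sum_congr rfl fun σ _ => ?_
              rw [hfder σ, mul_add]
        _ = ∑ σ : Equiv.Perm (Fin (n+1)), ((Equiv.Perm.sign σ : ℤ) : ℝ) *
                ((∏ i : Fin n, fderiv ℝ (U i) p (dir (σ i.castSucc)))
                  * fderiv ℝ Φ p (dir (σ (Fin.last n)))) := by
              rw [Finset.sum_add_distrib, hzero, zero_add]

/-- Pointwise identity for the boundary integrand. -/
lemma bdry_sum_identity (u : Fin n → EuclideanSpace ℝ (Fin n) → ℝ)
    (φ : EuclideanSpace ℝ (Fin n) → ℝ)
    (U : Fin n → EuclideanSpace ℝ (Fin n) × ℝ → ℝ)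
    (Φ : EuclideanSpace ℝ (Fin n) × ℝ → ℝ)
    (hU : ∀ i, ContDiff ℝ (⊤ : ℕ∞) (U i))
    (hext : ∀ i x, U i (x, 0) = u i x) (hextφ : ∀ x, Φ (x, 0) = φ x)
    (G : Equiv.Perm (Fin (n+1)) → EuclideanSpace ℝ (Fin n) × ℝ → ℝ)
    (hG : G = fun σ p => Φ p * ∏ i : Fin n, fderiv ℝ (U i) p (dir (σ i.castSucc)))
    (x : EuclideanSpace ℝ (Fin n)) :
    (bdryMatrix u x).det * φ x
      = ∑ σ : Equiv.Perm (Fin (n+1)), ((Equiv.Perm.sign σ : ℤ) : ℝ) *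
          (if σ (Fin.last n) = Fin.last n then G σ (x, 0) else 0) := by
  classical
  have hbdryder : ∀ (i : Fin n) (w : EuclideanSpace ℝ (Fin n)),
      fderiv ℝ (U i) (x, 0) (w, 0) = fderiv ℝ (u i) x w := by
    intro i w
    have h1 : HasFDerivAt (fun y : EuclideanSpace ℝ (Fin n) => U i (y, (0:ℝ)))
        ((fderiv ℝ (U i) (x, 0)).comp
          ((ContinuousLinearMap.id ℝ (EuclideanSpace ℝ (Fin n))).prod 0)) x :=
      (((hU i).differentiable (by simp) (x, 0)).hasFDerivAt).comp x
        ((hasFDerivAt_id x).prodMk (hasFDerivAt_const (0:ℝ) x))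
    have h2 : u i = fun y : EuclideanSpace ℝ (Fin n) => U i (y, (0:ℝ)) :=
      funext fun y => (hext i y).symm
    rw [h2, h1.fderiv]
    simp
  set B : Matrix (Fin (n+1)) (Fin (n+1)) ℝ := Matrix.of fun i j =>
    if hi : (i:ℕ) < n then
      (if hj : (j:ℕ) < n then fderiv ℝ (u ⟨i, hi⟩) x (EuclideanSpace.single ⟨j, hj⟩ 1) else 0)
    else (if (j:ℕ) < n then 0 else 1) with hB
  have hBlast : ∀ j : Fin (n+1), B (Fin.last n) j = if (j:ℕ) < n then 0 else 1 := by
    intro j; simp [hB, Matrix.of_apply]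
  have hBcast : ∀ (i : Fin n) (j : Fin (n+1)) (hj : (j:ℕ) < n),
      B i.castSucc j = fderiv ℝ (u i) x (EuclideanSpace.single ⟨j, hj⟩ 1) := by
    intro i j hj
    have hi : ((i.castSucc : Fin (n+1)) : ℕ) < n := by simp [Fin.is_lt]
    have : (⟨(i.castSucc : Fin (n+1)), hi⟩ : Fin n) = i := Fin.ext (by simp)
    simp only [hB, Matrix.of_apply, dif_pos hi, dif_pos hj, this]
  have hdetB : B.det = (bdryMatrix u x).det := by
    rw [Matrix.det_succ_row B (Fin.last n)]
    rw [Finset.sum_eq_single (Fin.last n)]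
    · have e1 : B (Fin.last n) (Fin.last n) = 1 := by
        rw [hBlast]; simp
      have e2 : ((-1:ℝ)) ^ ((Fin.last n : ℕ) + (Fin.last n : ℕ)) = 1 :=
        Even.neg_one_pow ⟨n, by simp [Fin.val_last]⟩
      have e3 : B.submatrix (Fin.last n).succAbove (Fin.last n).succAbove
          = bdryMatrix u x := by
        ext i j
        rw [Matrix.submatrix_apply, Fin.succAbove_last]
        have hj : ((j.castSucc : Fin (n+1)) : ℕ) < n := by simp [Fin.is_lt]
        rw [hBcast i j.castSucc hj]
        have : (⟨(j.castSucc : Fin (n+1)), hj⟩ : Fin n) = j := Fin.ext (by simp)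
        rw [this]
        simp [bdryMatrix]
      rw [e1, e2, e3]
      ring
    · intro j _ hj
      have hjlt : (j:ℕ) < n := Fin.val_lt_last hj
      rw [hBlast, if_pos hjlt]
      ring
    · intro hmem
      exact absurd (Finset.mem_univ _) hmem
  have hsum : ∑ σ : Equiv.Perm (Fin (n+1)), ((Equiv.Perm.sign σ : ℤ) : ℝ) *
      (if σ (Fin.last n) = Fin.last n then G σ (x, 0) else 0) = φ x * B.det := by
    rw [det_row_expansion' B, Finset.mul_sum]
    refine Finset.sum_congr rfl fun σ _ => ?_
    rw [Fin.prod_univ_castSucc]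
    by_cases hσ : σ (Fin.last n) = Fin.last n
    · rw [if_pos hσ]
      have hB1 : B (Fin.last n) (σ (Fin.last n)) = 1 := by
        rw [hσ, hBlast]; simp
      have hfac : ∀ i : Fin n, B i.castSucc (σ i.castSucc)
          = fderiv ℝ (U i) (x, 0) (dir (σ i.castSucc)) := by
        intro i
        have hne : σ i.castSucc ≠ Fin.last n := by
          intro hc
          exact (Fin.castSucc_lt_last i).ne (σ.injective (hc.trans hσ.symm))
        have hj : ((σ i.castSucc : Fin (n+1)) : ℕ) < n := Fin.val_lt_last hne
        rw [hBcast i _ hj]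
        have hd : dir (σ i.castSucc) =
            ((EuclideanSpace.single (⟨(σ i.castSucc : Fin (n+1)), hj⟩ : Fin n) 1 :
              EuclideanSpace ℝ (Fin n)), (0:ℝ)) := by
          simp [dir, hj]
        rw [hd, hbdryder]
      have hGval : G σ (x, 0) = φ x * ∏ i : Fin n, B i.castSucc (σ i.castSucc) := by
        rw [hG]
        simp only [hextφ x]
        congr 1
        exact (Finset.prod_congr rfl fun i _ => (hfac i)).symm
      rw [hGval, hB1, mul_one]
      ring
    · rw [if_neg hσ]
      have hlt : ((σ (Fin.last n) : Fin (n+1)) : ℕ) < n := Fin.val_lt_last hσ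
      have : B (Fin.last n) (σ (Fin.last n)) = 0 := by
        rw [hBlast, if_pos hlt]
      rw [this]
      ring
  rw [hsum, hdetB]
  ring

end Helpers

/-- Stokes' theorem for the Jacobian: for smooth compactly supported extensions
`U¹,…,Uⁿ,Φ` of `u¹,…,uⁿ,φ`, the boundary integral `∫_{ℝⁿ} det(∇_x u¹,…,∇_x uⁿ) φ`
equals, up to a sign, the bulk integral `∫_{ℝ^{n+1}_+} det(∇_{x,t}U¹,…,∇_{x,t}Uⁿ,∇_{x,t}Φ)`. -/
theorem stmt9 {n : ℕ} (u : Fin n → EuclideanSpace ℝ (Fin n) → ℝ)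
    (φ : EuclideanSpace ℝ (Fin n) → ℝ)
    (U : Fin n → EuclideanSpace ℝ (Fin n) × ℝ → ℝ)
    (Φ : EuclideanSpace ℝ (Fin n) × ℝ → ℝ)
    (hu : ∀ i, ContDiff ℝ (⊤ : ℕ∞) (u i)) (hu' : ∀ i, HasCompactSupport (u i))
    (hφ : ContDiff ℝ (⊤ : ℕ∞) φ) (hφ' : HasCompactSupport φ)
    (hU : ∀ i, ContDiff ℝ (⊤ : ℕ∞) (U i)) (hU' : ∀ i, HasCompactSupport (U i))
    (hΦ : ContDiff ℝ (⊤ : ℕ∞) Φ) (hΦ' : HasCompactSupport Φ)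
    (hext : ∀ i x, U i (x, 0) = u i x) (hextφ : ∀ x, Φ (x, 0) = φ x) :
    ∃ ε : ℝ, (ε = 1 ∨ ε = -1) ∧
      ∫ x, (bdryMatrix u x).det * φ x =
        ε * ∫ p in upperHalf n, (bulkMatrix (Fin.snoc U Φ) p).det := by
  classical
  refine ⟨-1, Or.inr rfl, ?_⟩
  set G : Equiv.Perm (Fin (n+1)) → EuclideanSpace ℝ (Fin n) × ℝ → ℝ :=
    fun σ p => Φ p * ∏ i : Fin n, fderiv ℝ (U i) p (dir (σ i.castSucc)) with hGdef
  have hG_smooth : ∀ σ, ContDiff ℝ (⊤ : ℕ∞) (G σ) := fun σ =>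
    hΦ.mul (contDiff_prod fun i _ => contDiff_fderiv_apply' (hU i) _)
  have hG_cs : ∀ σ, HasCompactSupport (G σ) := fun σ => hΦ'.mul_right
  have key : ∀ p, (bulkMatrix (Fin.snoc U Φ) p).det
      = ∑ σ : Equiv.Perm (Fin (n+1)),
          ((Equiv.Perm.sign σ : ℤ) : ℝ) * fderiv ℝ (G σ) p (dir (σ (Fin.last n))) :=
    bulk_div_identity U Φ hU hΦ G hGdef (Fin.snoc U Φ) rfl
  have hbulkterm_int : ∀ σ : Equiv.Perm (Fin (n+1)),
      Integrable (fun p : EuclideanSpace ℝ (Fin n) × ℝ =>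
        fderiv ℝ (G σ) p (dir (σ (Fin.last n)))) :=
    fun σ => (contDiff_fderiv_apply' (hG_smooth σ) _).continuous.integrable_of_hasCompactSupport
      ((hG_cs σ).fderiv_apply ℝ _)
  have hbulk : ∫ p in upperHalf n, (bulkMatrix (Fin.snoc U Φ) p).det
      = ∑ σ : Equiv.Perm (Fin (n+1)), ((Equiv.Perm.sign σ : ℤ) : ℝ) *
          ∫ p in upperHalf n, fderiv ℝ (G σ) p (dir (σ (Fin.last n))) := by
    calc ∫ p in upperHalf n, (bulkMatrix (Fin.snoc U Φ) p).det
        = ∫ p in upperHalf n, ∑ σ : Equiv.Perm (Fin (n+1)),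
            ((Equiv.Perm.sign σ : ℤ) : ℝ) * fderiv ℝ (G σ) p (dir (σ (Fin.last n))) :=
          integral_congr_ae (Filter.Eventually.of_forall fun p => key p)
    _ = ∑ σ : Equiv.Perm (Fin (n+1)), ∫ p in upperHalf n,
            ((Equiv.Perm.sign σ : ℤ) : ℝ) * fderiv ℝ (G σ) p (dir (σ (Fin.last n))) :=
          integral_finset_sum _ (fun σ _ => ((hbulkterm_int σ).const_mul _).integrableOn)
    _ = ∑ σ : Equiv.Perm (Fin (n+1)), ((Equiv.Perm.sign σ : ℤ) : ℝ) *
            ∫ p in upperHalf n, fderiv ℝ (G σ) p (dir (σ (Fin.last n))) :=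
          Finset.sum_congr rfl fun σ _ => integral_const_mul _ _
  have heval : ∀ σ : Equiv.Perm (Fin (n+1)),
      ∫ p in upperHalf n, fderiv ℝ (G σ) p (dir (σ (Fin.last n)))
        = -∫ x, (if σ (Fin.last n) = Fin.last n then G σ (x, 0) else 0) := by
    intro σ
    by_cases hσ : σ (Fin.last n) = Fin.last n
    · have hd : dir (σ (Fin.last n)) = ((0 : EuclideanSpace ℝ (Fin n)), (1:ℝ)) := by
        rw [hσ]; simp [dir]
      rw [hd, integral_vert' (hG_smooth σ) (hG_cs σ)]
      simp only [if_pos hσ]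
    · have hlt : ((σ (Fin.last n) : Fin (n+1)) : ℕ) < n := Fin.val_lt_last hσ
      have hd : dir (σ (Fin.last n)) =
          ((EuclideanSpace.single (⟨(σ (Fin.last n) : Fin (n+1)), hlt⟩ : Fin n) 1 :
            EuclideanSpace ℝ (Fin n)), (0:ℝ)) := by
        simp [dir, hlt]
      rw [hd, integral_horiz' (hG_smooth σ) (hG_cs σ)]
      simp [if_neg hσ]
  have hbt_int : ∀ σ : Equiv.Perm (Fin (n+1)),
      Integrable (fun x : EuclideanSpace ℝ (Fin n) =>
        if σ (Fin.last n) = Fin.last n then G σ (x, 0) else 0) := by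
    intro σ
    by_cases hσ : σ (Fin.last n) = Fin.last n
    · simp only [if_pos hσ]
      exact ((hG_smooth σ).continuous.comp
        (continuous_id.prodMk continuous_const)).integrable_of_hasCompactSupport
        (hcs_slice_right' (hG_cs σ) 0)
    · simp only [if_neg hσ]
      exact integrable_zero _ _ _
  have hbdry : ∫ x, (bdryMatrix u x).det * φ x
      = ∑ σ : Equiv.Perm (Fin (n+1)), ((Equiv.Perm.sign σ : ℤ) : ℝ) *
          ∫ x, (if σ (Fin.last n) = Fin.last n then G σ (x, 0) else 0) := by
    calc ∫ x, (bdryMatrix u x).det * φ x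
        = ∫ x, ∑ σ : Equiv.Perm (Fin (n+1)), ((Equiv.Perm.sign σ : ℤ) : ℝ) *
            (if σ (Fin.last n) = Fin.last n then G σ (x, 0) else 0) :=
          integral_congr_ae (Filter.Eventually.of_forall fun x =>
            bdry_sum_identity u φ U Φ hU hext hextφ G hGdef x)
    _ = ∑ σ : Equiv.Perm (Fin (n+1)), ∫ x, ((Equiv.Perm.sign σ : ℤ) : ℝ) *
            (if σ (Fin.last n) = Fin.last n then G σ (x, 0) else 0) :=
          integral_finset_sum _ (fun σ _ => (hbt_int σ).const_mul _)
    _ = ∑ σ : Equiv.Perm (Fin (n+1)), ((Equiv.Perm.sign σ : ℤ) : ℝ) *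
            ∫ x, (if σ (Fin.last n) = Fin.last n then G σ (x, 0) else 0) :=
          Finset.sum_congr rfl fun σ _ => integral_const_mul _ _
  rw [hbdry, hbulk]
  simp only [heval]
  rw [Finset.mul_sum]
  refine Finset.sum_congr rfl fun σ _ => by ring
end

section
/- Let F, G be harmonic on ℝ^{n+1}_+ and R_i F, R_i G also harmonic with ∂_t R_i F = −∂_{x_i} F and ∂_t R_i G = −∂_{x_i} G. Then ∂_{tt}(R_i F · G + F · R_i G) = −(∂_{tt}R_iF · G + F · ∂_{tt}R_iG) + (R_iF ∂_{tt}G + ∂_{tt}F R_iG) − 2 ∂_{x_i}(F ∂_t G + ∂_t F · G), and hence, using harmonicity to replace ∂_{tt} by −Δ_x, the left-hand side is a sum of x-divergences: ∂_{tt}(R_iF G + F R_iG) = ∇_x·(∇_xR_iF · G + F ∇_xR_iG) − ∇_x·(R_iF ∇_xG + ∇_xF · R_iG) − 2∂_{x_i}(F∂_tG + ∂_tF G). -/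
open scoped BigOperators

/-- Partial derivative in the `j`-th horizontal (`x`) direction, for functions on
the half-space model `ℝⁿ × ℝ`. -/
noncomputable def pdx {n : ℕ} (j : Fin n) (f : EuclideanSpace ℝ (Fin n) × ℝ → ℝ)
    (p : EuclideanSpace ℝ (Fin n) × ℝ) : ℝ :=
  fderiv ℝ f p (EuclideanSpace.single j 1, 0)

/-- Partial derivative in the vertical (`t`) direction. -/
noncomputable def pdt {n : ℕ} (f : EuclideanSpace ℝ (Fin n) × ℝ → ℝ)
    (p : EuclideanSpace ℝ (Fin n) × ℝ) : ℝ :=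
  fderiv ℝ f p (0, 1)

/-- `f` is harmonic on the open upper half space `ℝⁿ × (0,∞)`. -/
def HarmonicUpper {n : ℕ} (f : EuclideanSpace ℝ (Fin n) × ℝ → ℝ) : Prop :=
  ∀ p : EuclideanSpace ℝ (Fin n) × ℝ, 0 < p.2 →
    pdt (pdt f) p + ∑ j : Fin n, pdx j (pdx j f) p = 0

/-! ### Auxiliary directional-derivative machinery -/

noncomputable def Dv {E : Type*} [NormedAddCommGroup E] [NormedSpace ℝ E]
    (v : E) (f : E → ℝ) (p : E) : ℝ := fderiv ℝ f p v

section DvLemmas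
variable {E : Type*} [NormedAddCommGroup E] [NormedSpace ℝ E]

lemma Dv_smooth {f : E → ℝ} (hf : ContDiff ℝ (⊤ : ℕ∞) f) (v : E) : ContDiff ℝ (⊤ : ℕ∞) (Dv v f) :=
  (hf.fderiv_right (by simp)).clm_apply contDiff_const

lemma Dv_add {f g : E → ℝ} (hf : ContDiff ℝ (⊤ : ℕ∞) f) (hg : ContDiff ℝ (⊤ : ℕ∞) g) (v : E) (p : E) :
    Dv v (fun q => f q + g q) p = Dv v f p + Dv v g p := by
  unfold Dv
  rw [fderiv_fun_add ((hf.differentiable (by simp)).differentiableAt)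
    ((hg.differentiable (by simp)).differentiableAt)]
  rfl

lemma Dv_mul {f g : E → ℝ} (hf : ContDiff ℝ (⊤ : ℕ∞) f) (hg : ContDiff ℝ (⊤ : ℕ∞) g) (v : E) (p : E) :
    Dv v (fun q => f q * g q) p = f p * Dv v g p + g p * Dv v f p := by
  unfold Dv
  rw [fderiv_fun_mul ((hf.differentiable (by simp)).differentiableAt)
    ((hg.differentiable (by simp)).differentiableAt)]
  simp

lemma Dv_neg {f : E → ℝ} (v p : E) : Dv v (fun q => -f q) p = -Dv v f p := by
  unfold Dv; rw [fderiv_fun_neg]; simp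

lemma Dv_comm {f : E → ℝ} (hf : ContDiff ℝ (⊤ : ℕ∞) f) (v w p : E) :
    Dv w (Dv v f) p = Dv v (Dv w f) p := by
  have hdf : ContDiff ℝ (⊤ : ℕ∞) (fderiv ℝ f) := hf.fderiv_right (by simp)
  have h1 : ∀ u : E, Dv u f = fun q => (fderiv ℝ f q) u := fun _ => rfl
  have key : ∀ u u' : E, Dv u' (Dv u f) p = fderiv ℝ (fderiv ℝ f) p u' u := by
    intro u u'
    rw [h1]
    show fderiv ℝ (fun q => (fderiv ℝ f q) ((fun _ => u) q)) p u' = _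
    rw [fderiv_clm_apply ((hdf.differentiable (by simp)).differentiableAt)
      (differentiableAt_const u)]
    simp
  rw [key, key]
  exact second_derivative_symmetric (f := f) (fun y => ((hf.differentiable (by simp)) y).hasFDerivAt)
    ((hdf.differentiable (by simp)) p).hasFDerivAt w v

lemma Dv_congr {f g : E → ℝ} {s : Set E} (hs : IsOpen s) {p : E} (hp : p ∈ s)
    (h : ∀ q ∈ s, f q = g q) (v : E) : Dv v f p = Dv v g p := by
  unfold Dv
  rw [Filter.EventuallyEq.fderiv_eq (Filter.eventually_of_mem (hs.mem_nhds hp) h)]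

end DvLemmas

section Wrappers
variable {n : ℕ}

local notation "E'" => EuclideanSpace ℝ (Fin n) × ℝ

lemma pdt_eq (f : E' → ℝ) : pdt f = Dv ((0 : EuclideanSpace ℝ (Fin n)), (1 : ℝ)) f := rfl

lemma pdx_eq (j : Fin n) (f : E' → ℝ) :
    pdx j f = Dv ((EuclideanSpace.single j 1 : EuclideanSpace ℝ (Fin n)), (0 : ℝ)) f := rfl

lemma pdt_smooth {f : E' → ℝ} (hf : ContDiff ℝ (⊤ : ℕ∞) f) : ContDiff ℝ (⊤ : ℕ∞) (pdt f) := by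
  rw [pdt_eq]; exact Dv_smooth hf _

lemma pdx_smooth (j : Fin n) {f : E' → ℝ} (hf : ContDiff ℝ (⊤ : ℕ∞) f) : ContDiff ℝ (⊤ : ℕ∞) (pdx j f) := by
  rw [pdx_eq]; exact Dv_smooth hf _

lemma pdt_add {f g : E' → ℝ} (hf : ContDiff ℝ (⊤ : ℕ∞) f) (hg : ContDiff ℝ (⊤ : ℕ∞) g) (p : E') :
    pdt (fun q => f q + g q) p = pdt f p + pdt g p := by
  simp only [pdt_eq]; exact Dv_add hf hg _ _

lemma pdx_add (j : Fin n) {f g : E' → ℝ} (hf : ContDiff ℝ (⊤ : ℕ∞) f) (hg : ContDiff ℝ (⊤ : ℕ∞) g) (p : E') :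
    pdx j (fun q => f q + g q) p = pdx j f p + pdx j g p := by
  simp only [pdx_eq]; exact Dv_add hf hg _ _

lemma pdt_mul {f g : E' → ℝ} (hf : ContDiff ℝ (⊤ : ℕ∞) f) (hg : ContDiff ℝ (⊤ : ℕ∞) g) (p : E') :
    pdt (fun q => f q * g q) p = f p * pdt g p + g p * pdt f p := by
  simp only [pdt_eq]; exact Dv_mul hf hg _ _

lemma pdx_mul (j : Fin n) {f g : E' → ℝ} (hf : ContDiff ℝ (⊤ : ℕ∞) f) (hg : ContDiff ℝ (⊤ : ℕ∞) g) (p : E') :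
    pdx j (fun q => f q * g q) p = f p * pdx j g p + g p * pdx j f p := by
  simp only [pdx_eq]; exact Dv_mul hf hg _ _

lemma pdt_neg {f : E' → ℝ} (p : E') : pdt (fun q => -f q) p = -pdt f p := by
  simp only [pdt_eq]; exact Dv_neg _ _

lemma pdtx_comm (j : Fin n) {f : E' → ℝ} (hf : ContDiff ℝ (⊤ : ℕ∞) f) (p : E') :
    pdt (pdx j f) p = pdx j (pdt f) p := by
  simp only [pdt_eq, pdx_eq]; exact Dv_comm hf _ _ p

lemma pdt_congrU {f g : E' → ℝ} (h : ∀ q : E', 0 < q.2 → f q = g q) {p : E'} (hp : 0 < p.2) :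
    pdt f p = pdt g p := by
  simp only [pdt_eq]
  exact Dv_congr (s := {q : E' | 0 < q.2}) (isOpen_lt continuous_const continuous_snd) hp
    (fun q hq => h q hq) _

end Wrappers

/-- The key algebraic identity for the Coifman–Rochberg–Weiss commutator: for harmonic
`F, G, RF, RG` on the upper half space with the intertwining relations
`∂_t(R_iF) = −∂_{x_i}F`, `∂_t(R_iG) = −∂_{x_i}G`, the function
`∂_{tt}(R_iF·G + F·R_iG)` equals the displayed combination, and hence is a sum of
`x`-divergences. -/
theorem stmt18 {n : ℕ} (i : Fin n)
    (F G RF RG : EuclideanSpace ℝ (Fin n) × ℝ → ℝ)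
    (hF : ContDiff ℝ (⊤ : ℕ∞) F) (hG : ContDiff ℝ (⊤ : ℕ∞) G)
    (hRF : ContDiff ℝ (⊤ : ℕ∞) RF) (hRG : ContDiff ℝ (⊤ : ℕ∞) RG)
    (hFh : HarmonicUpper F) (hGh : HarmonicUpper G)
    (hRFh : HarmonicUpper RF) (hRGh : HarmonicUpper RG)
    (hiF : ∀ p : EuclideanSpace ℝ (Fin n) × ℝ, 0 < p.2 → pdt RF p = -pdx i F p)
    (hiG : ∀ p : EuclideanSpace ℝ (Fin n) × ℝ, 0 < p.2 → pdt RG p = -pdx i G p) :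
    ∀ p : EuclideanSpace ℝ (Fin n) × ℝ, 0 < p.2 →
      (pdt (pdt (fun q => RF q * G q + F q * RG q)) p =
        -(pdt (pdt RF) p * G p + F p * pdt (pdt RG) p)
          + (RF p * pdt (pdt G) p + pdt (pdt F) p * RG p)
          - 2 * pdx i (fun q => F q * pdt G q + pdt F q * G q) p) ∧
      (pdt (pdt (fun q => RF q * G q + F q * RG q)) p =
        (∑ j : Fin n, pdx j (fun q => pdx j RF q * G q + F q * pdx j RG q) p)
          - (∑ j : Fin n, pdx j (fun q => RF q * pdx j G q + pdx j F q * RG q) p)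
          - 2 * pdx i (fun q => F q * pdt G q + pdt F q * G q) p) := by
  intro p hp
  -- Expansion of the inner t-derivative
  have h1 : pdt (fun q => RF q * G q + F q * RG q) = fun q =>
      (RF q * pdt G q + G q * pdt RF q) + (F q * pdt RG q + RG q * pdt F q) := by
    funext q
    rw [pdt_add (hRF.mul hG) (hF.mul hRG), pdt_mul hRF hG, pdt_mul hF hRG]
  have sA : ContDiff ℝ (⊤ : ℕ∞) (fun q => RF q * pdt G q + G q * pdt RF q) :=
    (hRF.mul (pdt_smooth hG)).add (hG.mul (pdt_smooth hRF))
  have sB : ContDiff ℝ (⊤ : ℕ∞) (fun q => F q * pdt RG q + RG q * pdt F q) :=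
    (hF.mul (pdt_smooth hRG)).add (hRG.mul (pdt_smooth hF))
  have h2 : pdt (pdt (fun q => RF q * G q + F q * RG q)) p =
      (RF p * pdt (pdt G) p + pdt G p * pdt RF p +
        (G p * pdt (pdt RF) p + pdt RF p * pdt G p)) +
      (F p * pdt (pdt RG) p + pdt RG p * pdt F p +
        (RG p * pdt (pdt F) p + pdt F p * pdt RG p)) := by
    rw [h1, pdt_add sA sB,
      pdt_add (hRF.mul (pdt_smooth hG)) (hG.mul (pdt_smooth hRF)),
      pdt_add (hF.mul (pdt_smooth hRG)) (hRG.mul (pdt_smooth hF)),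
      pdt_mul hRF (pdt_smooth hG), pdt_mul hG (pdt_smooth hRF),
      pdt_mul hF (pdt_smooth hRG), pdt_mul hRG (pdt_smooth hF)]
  have c1 : pdt RF p = -pdx i F p := hiF p hp
  have c2 : pdt RG p = -pdx i G p := hiG p hp
  have c3 : pdt (pdt RF) p = -pdx i (pdt F) p := by
    have h := pdt_congrU (f := pdt RF) (g := fun q => -pdx i F q) hiF hp
    rw [h, pdt_neg, pdtx_comm i hF]
  have c4 : pdt (pdt RG) p = -pdx i (pdt G) p := by
    have h := pdt_congrU (f := pdt RG) (g := fun q => -pdx i G q) hiG hp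
    rw [h, pdt_neg, pdtx_comm i hG]
  have h4 : pdx i (fun q => F q * pdt G q + pdt F q * G q) p =
      (F p * pdx i (pdt G) p + pdt G p * pdx i F p) +
      (pdt F p * pdx i G p + G p * pdx i (pdt F) p) := by
    rw [pdx_add i (hF.mul (pdt_smooth hG)) ((pdt_smooth hF).mul hG),
      pdx_mul i hF (pdt_smooth hG), pdx_mul i (pdt_smooth hF) hG]
  have part1 : pdt (pdt (fun q => RF q * G q + F q * RG q)) p =
      -(pdt (pdt RF) p * G p + F p * pdt (pdt RG) p)
        + (RF p * pdt (pdt G) p + pdt (pdt F) p * RG p)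
        - 2 * pdx i (fun q => F q * pdt G q + pdt F q * G q) p := by
    rw [h2, h4, c1, c2, c3, c4]; ring
  refine ⟨part1, ?_⟩
  -- second part: rewrite the x-divergence sums
  have e1 : ∀ j : Fin n, pdx j (fun q => pdx j RF q * G q + F q * pdx j RG q) p =
      (pdx j RF p * pdx j G p + G p * pdx j (pdx j RF) p) +
      (F p * pdx j (pdx j RG) p + pdx j RG p * pdx j F p) := by
    intro j
    rw [pdx_add j ((pdx_smooth j hRF).mul hG) (hF.mul (pdx_smooth j hRG)),
      pdx_mul j (pdx_smooth j hRF) hG, pdx_mul j hF (pdx_smooth j hRG)]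
  have e2 : ∀ j : Fin n, pdx j (fun q => RF q * pdx j G q + pdx j F q * RG q) p =
      (RF p * pdx j (pdx j G) p + pdx j G p * pdx j RF p) +
      (pdx j F p * pdx j RG p + RG p * pdx j (pdx j F) p) := by
    intro j
    rw [pdx_add j (hRF.mul (pdx_smooth j hG)) ((pdx_smooth j hF).mul hRG),
      pdx_mul j hRF (pdx_smooth j hG), pdx_mul j (pdx_smooth j hF) hRG]
  have hdiff : (∑ j : Fin n, pdx j (fun q => pdx j RF q * G q + F q * pdx j RG q) p)
      - (∑ j : Fin n, pdx j (fun q => RF q * pdx j G q + pdx j F q * RG q) p)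
      = G p * (∑ j : Fin n, pdx j (pdx j RF) p) + F p * (∑ j : Fin n, pdx j (pdx j RG) p)
        - RF p * (∑ j : Fin n, pdx j (pdx j G) p) - RG p * (∑ j : Fin n, pdx j (pdx j F) p) := by
    rw [← Finset.sum_sub_distrib]
    have : ∀ j : Fin n, pdx j (fun q => pdx j RF q * G q + F q * pdx j RG q) p
        - pdx j (fun q => RF q * pdx j G q + pdx j F q * RG q) p
        = G p * pdx j (pdx j RF) p + F p * pdx j (pdx j RG) p
          - RF p * pdx j (pdx j G) p - RG p * pdx j (pdx j F) p := by
      intro j; rw [e1 j, e2 j]; ring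
    rw [Finset.sum_congr rfl (fun j _ => this j)]
    simp only [Finset.sum_sub_distrib, Finset.sum_add_distrib, ← Finset.mul_sum]
  have hRF' : (∑ j : Fin n, pdx j (pdx j RF) p) = -pdt (pdt RF) p := by
    have := hRFh p hp; linarith
  have hRG' : (∑ j : Fin n, pdx j (pdx j RG) p) = -pdt (pdt RG) p := by
    have := hRGh p hp; linarith
  have hG' : (∑ j : Fin n, pdx j (pdx j G) p) = -pdt (pdt G) p := by
    have := hGh p hp; linarith
  have hF' : (∑ j : Fin n, pdx j (pdx j F) p) = -pdt (pdt F) p := by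
    have := hFh p hp; linarith
  rw [part1]
  rw [hRF', hRG', hG', hF'] at hdiff
  linarith [hdiff]
end
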